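/- Let U be a smooth manifold, ζ a smooth vector field on U, and W⁰ an arbitrary smooth one-form on U. For t ∈ ℝ define the one-form W(t) pointwise by W(t)_p = f(a_p, t)·W⁰_p, where a_p = W⁰(ζ)(p) and f(a,t) = (exp(at) − 1)/a for a ≠ 0 and f(0,t) = t. Then each W(t) is a smooth one-form satisfying 1 + W(t)(ζ) = exp(t·W⁰(ζ)) > 0 pointwise (so W(t) ∈ G^ζ), and W(s)·W(t) = W(t+s) for all s, t ∈ ℝ; i.e. t ↦ W(t) is a one-parameter subgroup of (G^ζ, ·). -/

import Mathlib

/-! Since `1 + a·f(a,t) = exp(at)`, the coefficient satisfies the cocycle identity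
`f(a, s + t) = f(a, s) + exp(as)·f(a, t)`, and on multiples `c·W⁰` of a fixed one-form the
product reads `(c·W⁰)·(d·W⁰) = (c + (1 + c·W⁰(ζ))·d)·W⁰`, so the cocycle identity is exactly
the group law. Smoothness of `W(t)` comes from `f(·, t)` being the difference quotient
`dslope (b ↦ exp(bt)) 0`, which is analytic, composed with the smooth function `W⁰(ζ)`. -/

open Bundle
open scoped Manifold

section

variable {E : Type*} [NormedAddCommGroup E] [NormedSpace ℝ E]
  {H : Type*} [TopologicalSpace H] (I : ModelWithCorners ℝ E H)
  {M : Type*} [TopologicalSpace M] [ChartedSpace H M] [IsManifold I (⊤ : ℕ∞) M]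

/-- A vector field is smooth if it is a smooth section of the tangent bundle. -/
def IsSmoothVectorField (ζ : ∀ x : M, TangentSpace I x) : Prop :=
  ContMDiff I I.tangent (⊤ : ℕ∞) (fun x => (⟨x, ζ x⟩ : TangentBundle I M))

/-- A one-form is smooth if it is a smooth section of the bundle of continuous
linear maps from the tangent bundle to the trivial real line bundle. -/
def IsSmoothOneForm (ω : ∀ x : M, TangentSpace I x →L[ℝ] ℝ) : Prop :=
  ContMDiff I (I.prod 𝓘(ℝ, E →L[ℝ] ℝ)) (⊤ : ℕ∞)
    (fun x => (⟨x, ω x⟩ : TotalSpace (E →L[ℝ] ℝ)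
      (fun x ↦ TangentSpace I x →SL[RingHom.id ℝ] Bundle.Trivial M ℝ x)))

/-- The product `W²·W¹ := W² + (1 + W²(ζ))·W¹` of one-forms relative to the vector
field `ζ`. -/
noncomputable def oneFormMul (ζ : ∀ x : M, TangentSpace I x)
    (W2 W1 : ∀ x : M, TangentSpace I x →L[ℝ] ℝ) :
    ∀ x : M, TangentSpace I x →L[ℝ] ℝ :=
  fun x => W2 x + (1 + W2 x (ζ x)) • W1 x

/-- The coefficient function `f(a, t) = (exp(at) − 1)/a` for `a ≠ 0`, `f(0, t) = t`. -/
noncomputable def ehlersCoeff (a t : ℝ) : ℝ :=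
  if a = 0 then t else (Real.exp (a * t) - 1) / a

theorem AnalyticAt.dslope {𝕜 E : Type*} [NontriviallyNormedField 𝕜] [NormedAddCommGroup E]
    [NormedSpace 𝕜 E] {f : 𝕜 → E} {c a : 𝕜} (hc : AnalyticAt 𝕜 f c) (ha : AnalyticAt 𝕜 f a) :
    AnalyticAt 𝕜 (dslope f c) a := by
  rcases eq_or_ne a c with rfl | hac
  · obtain ⟨p, hp⟩ := hc
    exact hp.has_fpower_series_dslope_fslope.analyticAt
  · have hslope : AnalyticAt 𝕜 (fun z => (z - c)⁻¹ • (f z - f c)) a :=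
      ((analyticAt_id.sub analyticAt_const).inv (sub_ne_zero.2 hac)).smul
        (ha.sub analyticAt_const)
    refine hslope.congr ?_
    filter_upwards [eventually_ne_nhds hac] with z hz
    rw [dslope_of_ne f hz, slope_def_module]

theorem ehlersCoeff_eq_dslope (a t : ℝ) :
    ehlersCoeff a t = dslope (fun b => Real.exp (b * t)) 0 a := by
  rcases eq_or_ne a 0 with rfl | ha
  · have hd : HasDerivAt (fun b => Real.exp (b * t)) (Real.exp (0 * t) * (1 * t)) 0 :=
      ((hasDerivAt_id 0).mul_const t).exp
    simp [ehlersCoeff, dslope_same, hd.deriv]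
  · simp [ehlersCoeff, ha, dslope_of_ne _ ha, slope_def_field, mul_comm a t]

theorem contDiff_ehlersCoeff_left (t : ℝ) {n : WithTop ℕ∞} :
    ContDiff ℝ n (fun a => ehlersCoeff a t) := by
  have hexp : ∀ b, AnalyticAt ℝ (fun b => Real.exp (b * t)) b := fun b => by fun_prop
  simp only [ehlersCoeff_eq_dslope]
  exact AnalyticOnNhd.contDiff fun a _ => (hexp 0).dslope (hexp a)

theorem one_add_ehlersCoeff_mul (a t : ℝ) : 1 + ehlersCoeff a t * a = Real.exp (t * a) := by
  rcases eq_or_ne a 0 with rfl | ha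
  · simp [ehlersCoeff]
  · rw [ehlersCoeff, if_neg ha, div_mul_cancel₀ _ ha, mul_comm a t]
    ring

theorem ehlersCoeff_add (a s t : ℝ) :
    ehlersCoeff a (s + t) = ehlersCoeff a s + (1 + ehlersCoeff a s * a) * ehlersCoeff a t := by
  rw [one_add_ehlersCoeff_mul]
  rcases eq_or_ne a 0 with rfl | ha
  · simp [ehlersCoeff]
  · simp only [ehlersCoeff, if_neg ha]
    rw [mul_add, Real.exp_add, mul_comm s a]
    field_simp
    ring

variable {I} in
theorem IsSmoothOneForm.smul {W : ∀ x : M, TangentSpace I x →L[ℝ] ℝ} {c : M → ℝ}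
    (hW : IsSmoothOneForm I W) (hc : ContMDiff I 𝓘(ℝ) (⊤ : ℕ∞) c) :
    IsSmoothOneForm I (fun x => c x • W x) :=
  hc.smul_section hW

variable {I} in
theorem IsSmoothOneForm.contMDiff_apply {W : ∀ x : M, TangentSpace I x →L[ℝ] ℝ}
    {ζ : ∀ x : M, TangentSpace I x} (hW : IsSmoothOneForm I W) (hζ : IsSmoothVectorField I ζ) :
    ContMDiff I 𝓘(ℝ) (⊤ : ℕ∞) (fun x => W x (ζ x)) :=
  fun x => (Bundle.contMDiffAt_totalSpace.1 ((hW x).clm_bundle_apply (hζ x))).2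

/-- **One-parameter subgroups of `(G^ζ, ·)`** (Section 3 of the paper): for a smooth
vector field `ζ` and an arbitrary smooth one-form `W⁰`, the curve
`W(t) = f(W⁰(ζ), t)·W⁰` (with `f(a,t) = (exp(at)−1)/a` for `a ≠ 0`, `f(0,t) = t`)
consists of smooth one-forms satisfying `1 + W(t)(ζ) = exp(t·W⁰(ζ)) > 0` pointwise
(so `W(t) ∈ G^ζ`), and `W(s)·W(t) = W(t+s)` for all `s, t ∈ ℝ`. -/
theorem ehlers_oneParameter_subgroup (ζ : ∀ x : M, TangentSpace I x)
    (hζ : IsSmoothVectorField I ζ)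
    (W0 : ∀ x : M, TangentSpace I x →L[ℝ] ℝ) (hW0 : IsSmoothOneForm I W0) :
    (∀ t : ℝ,
      IsSmoothOneForm I (fun x => ehlersCoeff (W0 x (ζ x)) t • W0 x)
      ∧ (∀ x : M,
          1 + (ehlersCoeff (W0 x (ζ x)) t • W0 x) (ζ x) = Real.exp (t * W0 x (ζ x))
          ∧ 0 < 1 + (ehlersCoeff (W0 x (ζ x)) t • W0 x) (ζ x)))
    ∧ ∀ s t : ℝ,
        oneFormMul I ζ (fun x => ehlersCoeff (W0 x (ζ x)) s • W0 x)
            (fun x => ehlersCoeff (W0 x (ζ x)) t • W0 x)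
          = fun x => ehlersCoeff (W0 x (ζ x)) (t + s) • W0 x := by
  have hcoeff : ∀ t, ContMDiff I 𝓘(ℝ) (⊤ : ℕ∞) fun x => ehlersCoeff (W0 x (ζ x)) t :=
    fun t => (contDiff_ehlersCoeff_left t).contMDiff.comp (hW0.contMDiff_apply hζ)
  refine ⟨fun t => ⟨hW0.smul (hcoeff t), fun x => ?_⟩, fun s t => ?_⟩
  · simp only [smul_apply, smul_eq_mul, one_add_ehlersCoeff_mul, Real.exp_pos, and_self]
  · funext x
    simp only [oneFormMul, smul_apply, smul_eq_mul, smul_smul, ← add_smul, add_comm t s,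
      ehlersCoeff_add]

end
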